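/- Let G be a finite group with center Z(G), arbitrary direct decomposition G = G₁ × ⋯ × G_d, and non-abelian components N₁, …, Nₘ with index sets Iⱼ = { i : Nᵢ ⊆ GⱼZ(G) }. For any subset J ⊆ {1,…,m}, the elements x ∈ G with C_x = ∏_{i ∈ J} Nᵢ are exactly those of the form x = z·∏_{i ∉ J} nᵢ with z ∈ Z(G) and nᵢ ∈ Nᵢ ∖ Z(G); in particular, for every collection of non-abelian direct factors there exists a full element. -/

import Mathlib

section NonAbelianComponents

variable (G : Type*) [Group G]

/-- Stages of the greedy construction of the set `M`: `greedyM 0` is the set of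
non-central elements of maximal centralizer order; `greedyM (n+1)` additionally
contains the non-central elements outside `⟨greedyM n⟩` of maximal centralizer order
among those. -/
def greedyM : ℕ → Set G
  | 0 => {g | g ∉ Subgroup.center G ∧ ∀ h : G, h ∉ Subgroup.center G →
      Nat.card (Subgroup.centralizer {h}) ≤ Nat.card (Subgroup.centralizer {g})}
  | (n + 1) => greedyM n ∪
      {g | g ∉ Subgroup.center G ∧ g ∉ Subgroup.closure (greedyM n) ∧
        ∀ h : G, h ∉ Subgroup.center G → h ∉ Subgroup.closure (greedyM n) →
          Nat.card (Subgroup.centralizer {h}) ≤ Nat.card (Subgroup.centralizer {g})}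

/-- The stable result `M` of the greedy construction. -/
def greedyMset : Set G := ⋃ n, greedyM G n

/-- Adjacency in the non-commuting graph restricted to `M`. -/
def ncAdj (a b : G) : Prop := a ∈ greedyMset G ∧ b ∈ greedyMset G ∧ a * b ≠ b * a

/-- The connected component of `g` in the non-commuting graph on `M`. -/
def ncComponent (g : G) : Set G :=
  {h ∈ greedyMset G | Relation.ReflTransGen (ncAdj G) g h}

/-- The non-abelian component of `G` associated with `g ∈ M`: the subgroup generated
by the connected component of `g` in the non-commuting graph on `M`. -/
def nonAbelianComponent (g : G) : Subgroup G := Subgroup.closure (ncComponent G g)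

end NonAbelianComponents

/-- The product `C_x` of the non-abelian components centralized by `x`. -/
def centComp {G : Type*} [Group G] (x : G) : Subgroup G :=
  ⨆ g ∈ {g ∈ greedyMset G | ∀ a ∈ nonAbelianComponent G g, Commute x a},
    nonAbelianComponent G g


/-!
The components `N_r` (one for each representative `r ∈ R`) pairwise commute, and together with
`Z(G)` they generate `G`: the chain `⟨greedyM n⟩` stabilizes, and at that point it already
contains every non-central element. Hence an element of `N_r` centralizing `N_r` is central, and
since `r ∈ N_r` is not central, the product `∏_{r ∈ A} N_r` determines `A`. Writing
`x = c · ∏_r m_r` with `c` central and `m_r ∈ N_r`, `x` centralizes `N_r` exactly when `m_r` is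
central; so `C_x = ∏_{r ∈ J} N_r` exactly when the non-central `m_r` are those with `r ∉ J`, and the
central ones are absorbed into `z`. A full element is the product of the representatives of the
components lying in the chosen factors.
-/
section CommutingSubgroups

variable {G : Type*} [Group G]

theorem Subgroup.mem_centralizer_iff_forall_commute {g : G} {s : Set G} :
    g ∈ Subgroup.centralizer s ↔ ∀ h ∈ s, Commute g h :=
  Subgroup.mem_centralizer_iff.trans (forall₂_congr fun _ _ => eq_comm)

theorem Subgroup.exists_mul_eq_of_mem_sup_of_commute {H K : Subgroup G}
    (hHK : ∀ h ∈ H, ∀ k ∈ K, Commute h k) {x : G} (hx : x ∈ H ⊔ K) :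
    ∃ h ∈ H, ∃ k ∈ K, h * k = x := by
  rw [← H.range_subtype, ← K.range_subtype,
    ← MonoidHom.noncommCoprod_range H.subtype K.subtype fun h k => hHK h h.2 k k.2] at hx
  obtain ⟨⟨h, k⟩, rfl⟩ := hx
  exact ⟨h, h.2, k, k.2, rfl⟩

theorem Subgroup.exists_list_prod_eq_of_mem_iSup {ι : Type*} [DecidableEq ι]
    {f : ι → Subgroup G} {l : List ι} (hl : l.Nodup)
    (hcomm : ∀ r ∈ l, ∀ s ∈ l, r ≠ s → ∀ a ∈ f r, ∀ b ∈ f s, Commute a b) {x : G}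
    (hx : x ∈ ⨆ s ∈ l, f s) : ∃ m : ι → G, (∀ s ∈ l, m s ∈ f s) ∧ (l.map m).prod = x := by
  induction l generalizing x with
  | nil =>
    simp only [List.not_mem_nil, iSup_false, iSup_bot, Subgroup.mem_bot] at hx
    exact ⟨1, by simp, by simp [hx]⟩
  | cons a l ih =>
    obtain ⟨ha, hl⟩ := List.nodup_cons.mp hl
    simp only [List.mem_cons, iSup_or, iSup_sup_eq, iSup_iSup_eq_left] at hx
    have hle : ⨆ s ∈ l, f s ≤ Subgroup.centralizer (f a) := iSup₂_le fun s hs b hb =>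
      Subgroup.mem_centralizer_iff_forall_commute.mpr fun c hc =>
        (hcomm a List.mem_cons_self s (List.mem_cons_of_mem _ hs)
          (ne_of_mem_of_not_mem hs ha).symm c hc b hb).symm
    have hcomm_a : ∀ h ∈ f a, ∀ k ∈ ⨆ s ∈ l, f s, Commute h k := fun h hh k hk =>
      (Subgroup.mem_centralizer_iff_forall_commute.mp (hle hk) h hh).symm
    obtain ⟨h, hh, k, hk, rfl⟩ := Subgroup.exists_mul_eq_of_mem_sup_of_commute hcomm_a hx
    obtain ⟨m, hm, rfl⟩ := ih hl (fun r hr s hs => hcomm r (List.mem_cons_of_mem _ hr) s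
      (List.mem_cons_of_mem _ hs)) hk
    have hm_eq : ∀ s ∈ l, Function.update m a h s = m s := fun s hs =>
      Function.update_of_ne (ne_of_mem_of_not_mem hs ha) _ _
    refine ⟨Function.update m a h, ?_, ?_⟩
    · intro s hs
      rcases List.mem_cons.mp hs with rfl | hs
      · simpa
      · rw [hm_eq s hs]; exact hm s hs
    · rw [List.map_cons, List.prod_cons, Function.update_self, List.map_congr_left hm_eq]

theorem Subgroup.list_prod_map_mem_iff {ι : Type*} {H : Subgroup G} {l : List ι} (hl : l.Nodup)
    {m : ι → G} {r : ι} (hother : ∀ s ∈ l, s ≠ r → m s ∈ H) :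
    (l.map m).prod ∈ H ↔ (r ∈ l → m r ∈ H) := by
  induction l with
  | nil => simp [one_mem]
  | cons a l ih =>
    obtain ⟨ha, hl⟩ := List.nodup_cons.mp hl
    have ih := ih hl fun s hs => hother s (List.mem_cons_of_mem _ hs)
    rw [List.map_cons, List.prod_cons]
    by_cases har : a = r
    · subst har
      rw [mul_mem_cancel_right (ih.mpr fun h => absurd h ha)]
      simp
    · rw [mul_mem_cancel_left (hother a List.mem_cons_self har), ih,
        List.mem_cons, or_iff_right (Ne.symm har)]

end CommutingSubgroups

section NonCommutingGraph

variable {G : Type*} [Group G]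

open Subgroup

instance : Std.Symm (ncAdj G) where
  symm _ _ h := ⟨h.2.1, h.1, Ne.symm h.2.2⟩

theorem nonAbelianComponent_eq_of_reflTransGen {g h : G}
    (hgh : Relation.ReflTransGen (ncAdj G) g h) :
    nonAbelianComponent G g = nonAbelianComponent G h := by
  refine congrArg Subgroup.closure (Set.ext fun a => and_congr_right fun _ => ⟨?_, hgh.trans⟩)
  exact (symm hgh).trans

theorem notMem_center_of_mem_greedyMset {g : G} (hg : g ∈ greedyMset G) :
    g ∉ center G := by
  obtain ⟨n, hg⟩ := Set.mem_iUnion.mp hg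
  induction n with
  | zero => exact hg.1
  | succ n ih => exact hg.elim ih (·.1)

theorem nonAbelianComponent_le_centralizer {r s : G}
    (hrs : ¬ Relation.ReflTransGen (ncAdj G) r s) :
    nonAbelianComponent G s ≤ centralizer (nonAbelianComponent G r) := by
  rw [nonAbelianComponent, nonAbelianComponent, closure_le, centralizer_closure]
  rintro b ⟨hbM, hsb⟩
  refine mem_centralizer_iff.mpr fun a ⟨haM, hra⟩ => ?_
  by_contra hab
  exact hrs (hra.trans (Relation.ReflTransGen.head ⟨haM, hbM, hab⟩ (symm hsb)))

theorem greedyM_subset_succ (n : ℕ) : greedyM G n ⊆ greedyM G (n + 1) :=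
  Set.subset_union_left

theorem mem_closure_greedyM_of_closure_succ_le [Finite G] {n : ℕ}
    (hn : Subgroup.closure (greedyM G (n + 1)) ≤ Subgroup.closure (greedyM G n)) {g : G}
    (hg : g ∉ center G) :
    g ∈ Subgroup.closure (greedyM G n) := by
  by_contra hgn
  obtain ⟨h, ⟨hhZ, hhn⟩, hmax⟩ := Set.exists_max_image
    {h | h ∉ center G ∧ h ∉ Subgroup.closure (greedyM G n)} (fun h => Nat.card (centralizer {h}))
    (Set.toFinite _) ⟨g, hg, hgn⟩
  exact hhn (hn (subset_closure (Or.inr ⟨hhZ, hhn, fun k hkZ hkn => hmax k ⟨hkZ, hkn⟩⟩)))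

theorem mem_closure_greedyMset_of_notMem_center [Finite G] {g : G} (hg : g ∉ center G) :
    g ∈ Subgroup.closure (greedyMset G) := by
  obtain ⟨n, hn⟩ := WellFoundedGT.monotone_chain_condition
    ⟨fun n => Subgroup.closure (greedyM G n),
      monotone_nat_of_le_succ fun n => closure_mono (greedyM_subset_succ n)⟩
  exact closure_mono (Set.subset_iUnion _ n)
    (mem_closure_greedyM_of_closure_succ_le (hn (n + 1) n.le_succ).ge hg)

end NonCommutingGraph

/-- The subgroups `nonAbelianComponent G r`, `r ∈ R`, are the non-abelian components `Nᵢ`, each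
listed once. -/
structure IsComponentTransversal {G : Type*} [Group G] (R : Finset G) : Prop where
  subset_greedyMset : (R : Set G) ⊆ greedyMset G
  not_reflTransGen : ∀ r ∈ R, ∀ s ∈ R, r ≠ s → ¬ Relation.ReflTransGen (ncAdj G) r s
  exists_reflTransGen : ∀ m ∈ greedyMset G, ∃ r ∈ R, Relation.ReflTransGen (ncAdj G) r m

namespace IsComponentTransversal

variable {G : Type*} [Group G] {R : Finset G}

open Subgroup

local notation "N" => nonAbelianComponent G

theorem notMem_center (hR : IsComponentTransversal R) {r : G} (hr : r ∈ R) :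
    r ∉ center G :=
  notMem_center_of_mem_greedyMset (hR.subset_greedyMset hr)

theorem mem_nonAbelianComponent_self (hR : IsComponentTransversal R) {r : G} (hr : r ∈ R) :
    r ∈ N r :=
  Subgroup.subset_closure ⟨hR.subset_greedyMset hr, Relation.ReflTransGen.refl⟩

theorem le_centralizer (hR : IsComponentTransversal R) {r s : G} (hr : r ∈ R) (hs : s ∈ R)
    (hrs : r ≠ s) : N s ≤ centralizer (N r) :=
  nonAbelianComponent_le_centralizer (hR.not_reflTransGen r hr s hs hrs)

theorem center_sup_iSup_eq_top [Finite G] (hR : IsComponentTransversal R) :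
    center G ⊔ ⨆ r ∈ R, N r = ⊤ := by
  refine eq_top_iff.mpr fun g _ => ?_
  by_cases hg : g ∈ center G
  · exact mem_sup_left hg
  refine mem_sup_right ((Subgroup.closure_le _).mpr (fun m hm => ?_)
    (mem_closure_greedyMset_of_notMem_center hg))
  obtain ⟨r, hr, hrm⟩ := hR.exists_reflTransGen m hm
  exact (le_iSup₂_of_le r hr le_rfl : N r ≤ ⨆ r ∈ R, N r) (Subgroup.subset_closure ⟨hm, hrm⟩)

theorem mem_center_of_forall_mem_centralizer [Finite G] (hR : IsComponentTransversal R)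
    {y : G} (hy : ∀ r ∈ R, y ∈ centralizer (N r)) : y ∈ center G := by
  have htop : ⊤ ≤ centralizer {y} := by
    rw [← hR.center_sup_iSup_eq_top]
    exact sup_le (center_le_centralizer _) (iSup₂_le fun r hr a ha =>
      mem_centralizer_singleton_iff.mpr (mem_centralizer_iff.mp (hy r hr) a ha))
  exact mem_center_iff.mpr fun g => mem_centralizer_singleton_iff.mp (htop (mem_top g))

theorem mem_center_iff_mem_centralizer [Finite G] (hR : IsComponentTransversal R) {r n : G}
    (hr : r ∈ R) (hn : n ∈ N r) : n ∈ center G ↔ n ∈ centralizer (N r) := by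
  refine ⟨fun hnZ => center_le_centralizer _ hnZ, fun hnC => ?_⟩
  refine hR.mem_center_of_forall_mem_centralizer fun s hs => ?_
  obtain rfl | hsr := eq_or_ne s r
  · exact hnC
  · exact hR.le_centralizer hs hr hsr hn

theorem subset_of_iSup_le_iSup [Finite G] (hR : IsComponentTransversal R) {A B : Finset G}
    (hA : A ⊆ R) (hB : B ⊆ R) (hAB : ⨆ r ∈ A, N r ≤ ⨆ r ∈ B, N r) : A ⊆ B := by
  intro r hrA
  by_contra hrB
  have hBr : ⨆ s ∈ B, N s ≤ centralizer (N r) :=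
    iSup₂_le fun s hs => hR.le_centralizer (hA hrA) (hB hs) fun h => hrB (h ▸ hs)
  have hr : r ∈ N r := hR.mem_nonAbelianComponent_self (hA hrA)
  refine hR.notMem_center (hA hrA) ((hR.mem_center_iff_mem_centralizer (hA hrA) hr).mpr ?_)
  exact hBr (hAB ((le_iSup₂_of_le r hrA le_rfl : N r ≤ ⨆ s ∈ A, N s) hr))

open Classical in
theorem centComp_eq (hR : IsComponentTransversal R) (x : G) :
    centComp x = ⨆ r ∈ R.filter (fun r => x ∈ centralizer (N r)), N r := by
  refine le_antisymm (iSup₂_le fun g ⟨hgM, hxg⟩ => ?_) (iSup₂_le fun r hr => ?_)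
  · obtain ⟨r, hr, hrg⟩ := hR.exists_reflTransGen g hgM
    rw [← nonAbelianComponent_eq_of_reflTransGen hrg] at hxg ⊢
    exact le_iSup₂_of_le r (Finset.mem_filter.mpr
      ⟨hr, mem_centralizer_iff_forall_commute.mpr hxg⟩) le_rfl
  · obtain ⟨hr, hxr⟩ := Finset.mem_filter.mp hr
    exact le_biSup (N ·) ⟨hR.subset_greedyMset hr, mem_centralizer_iff_forall_commute.mp hxr⟩

theorem centComp_eq_iSup_iff [Finite G] (hR : IsComponentTransversal R) {J : Finset G}
    (hJ : J ⊆ R) {x : G} :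
    centComp x = ⨆ r ∈ J, N r ↔ ∀ r ∈ R, (x ∈ centralizer (N r) ↔ r ∈ J) := by
  classical
  have hfilter : R.filter (fun r => x ∈ centralizer (N r)) ⊆ R := Finset.filter_subset _ _
  calc centComp x = ⨆ r ∈ J, N r ↔ R.filter (fun r => x ∈ centralizer (N r)) = J := by
        rw [hR.centComp_eq x]
        exact ⟨fun h => (hR.subset_of_iSup_le_iSup hfilter hJ h.le).antisymm
          (hR.subset_of_iSup_le_iSup hJ hfilter h.ge), fun h => h ▸ rfl⟩
    _ ↔ ∀ r ∈ R, (x ∈ centralizer (N r) ↔ r ∈ J) := by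
        simp only [Finset.ext_iff, Finset.mem_filter]
        grind

theorem mul_list_prod_mem_centralizer_iff [Finite G] (hR : IsComponentTransversal R)
    {z : G} (hz : z ∈ center G) {l : List G} (hl : l.Nodup) (hlR : ∀ s ∈ l, s ∈ R)
    {m : G → G} (hm : ∀ s ∈ l, m s ∈ N s) {r : G} (hr : r ∈ R) :
    z * (l.map m).prod ∈ centralizer (N r) ↔ (r ∈ l → m r ∈ center G) := by
  rw [mul_mem_cancel_left (center_le_centralizer _ hz),
    list_prod_map_mem_iff hl fun s hs hsr => hR.le_centralizer hr (hlR s hs) hsr.symm (hm s hs)]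
  exact imp_congr_right fun hrl => (hR.mem_center_iff_mem_centralizer hr (hm r hrl)).symm

theorem exists_center_mul_list_prod [Finite G] [DecidableEq G] (hR : IsComponentTransversal R)
    {J : Finset G} (hJ : J ⊆ R) {x : G} (hx : ∀ r ∈ R, (x ∈ centralizer (N r) ↔ r ∈ J)) :
    ∃ z ∈ center G, ∃ n : G → G, (∀ r ∈ R \ J, n r ∈ N r ∧ n r ∉ center G) ∧
      x = z * ((R \ J).toList.map n).prod := by
  set l := J.toList ++ (R \ J).toList
  have hl : l.Nodup := J.nodup_toList.append (R \ J).nodup_toList fun a ha hb =>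
    (Finset.mem_sdiff.mp (Finset.mem_toList.mp hb)).2 (Finset.mem_toList.mp ha)
  have hmem : ∀ s, s ∈ l ↔ s ∈ R := fun s => by
    simp only [l, List.mem_append, Finset.mem_toList, Finset.mem_sdiff]
    exact ⟨by rintro (h | h); exacts [hJ h, h.1], fun h => (em (s ∈ J)).imp_right (⟨h, ·⟩)⟩
  have hxl : x ∈ center G ⊔ ⨆ s ∈ l, N s := by
    rw [show ⨆ s ∈ l, N s = ⨆ s ∈ R, N s from iSup_congr fun s => iSup_congr_Prop (hmem s)
      fun _ => rfl, hR.center_sup_iSup_eq_top]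
    exact mem_top x
  obtain ⟨c, hc, y, hy, rfl⟩ := exists_mul_eq_of_mem_sup_of_commute
    (fun c hc y _ => (mem_center_iff.mp hc y).symm) hxl
  obtain ⟨m, hm, rfl⟩ := exists_list_prod_eq_of_mem_iSup hl (fun r hr s hs hrs =>
    fun a ha b hb => (mem_centralizer_iff_forall_commute.mp
      (hR.le_centralizer ((hmem r).mp hr) ((hmem s).mp hs) hrs hb) a ha).symm) hy
  have hcent : ∀ r ∈ R, (r ∈ J ↔ m r ∈ center G) := fun r hr => by
    rw [← hx r hr, hR.mul_list_prod_mem_centralizer_iff hc hl (fun s => (hmem s).mp)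
      hm hr, imp_iff_right ((hmem r).mpr hr)]
  refine ⟨c * (J.toList.map m).prod, mul_mem hc (list_prod_mem ?_), m, ?_, ?_⟩
  · simp only [List.mem_map, Finset.mem_toList]
    rintro _ ⟨r, hrJ, rfl⟩
    exact (hcent r (hJ hrJ)).mp hrJ
  · intro r hr
    obtain ⟨hrR, hrJ⟩ := Finset.mem_sdiff.mp hr
    exact ⟨hm r ((hmem r).mpr hrR), fun h => hrJ ((hcent r hrR).mpr h)⟩
  · rw [List.map_append, List.prod_append, mul_assoc]

theorem exists_forall_mem_centralizer_iff_notMem [Finite G] (hR : IsComponentTransversal R)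
    {K : Finset G} (hK : K ⊆ R) : ∃ x : G, ∀ r ∈ R, (x ∈ centralizer (N r) ↔ r ∉ K) := by
  refine ⟨(K.toList.map id).prod, fun r hr => ?_⟩
  rw [← one_mul (List.prod _), hR.mul_list_prod_mem_centralizer_iff (m := id) (one_mem _)
    K.nodup_toList (fun s hs => hK (Finset.mem_toList.mp hs))
    (fun s hs => hR.mem_nonAbelianComponent_self (hK (Finset.mem_toList.mp hs))) hr,
    Finset.mem_toList, id, imp_iff_not (hR.notMem_center hr)]

end IsComponentTransversal

theorem centComp_eq_iff_product_of_noncentral_general {G : Type*} [Group G] [Finite G]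
    [DecidableEq G]
    {d : ℕ} (Gf : Fin d → Subgroup G)
    (R : Finset G) (hRM : (R : Set G) ⊆ greedyMset G)
    (hRdisj : ∀ r ∈ R, ∀ s ∈ R, r ≠ s → ¬ Relation.ReflTransGen (ncAdj G) r s)
    (hRfull : ∀ m ∈ greedyMset G, ∃ r ∈ R, Relation.ReflTransGen (ncAdj G) r m)
    (J : Finset G) (hJ : J ⊆ R) :
    (∀ x : G,
      (centComp x = ⨆ r ∈ J, nonAbelianComponent G r) ↔
        (∃ z ∈ Subgroup.center G, ∃ n : G → G,
          (∀ r ∈ R \ J, n r ∈ nonAbelianComponent G r ∧ n r ∉ Subgroup.center G) ∧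
          x = z * ((R \ J).toList.map n).prod)) ∧
    (∀ Jf : Finset (Fin d), (∀ j ∈ Jf, ¬ ∀ a b : Gf j, a * b = b * a) →
      ∃ x : G, ∀ r ∈ R,
        ((∃ a ∈ nonAbelianComponent G r, ¬ Commute x a) ↔
          ∃ j ∈ Jf, nonAbelianComponent G r ≤ Gf j ⊔ Subgroup.center G)) := by
  have hR : IsComponentTransversal R := ⟨hRM, hRdisj, hRfull⟩
  refine ⟨fun x => ?_, fun Jf _ => ?_⟩
  · rw [hR.centComp_eq_iSup_iff hJ]
    refine ⟨hR.exists_center_mul_list_prod hJ, ?_⟩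
    rintro ⟨z, hz, n, hn, rfl⟩ r hr
    have hRJ : ∀ s ∈ (R \ J).toList, s ∈ R \ J := fun s => Finset.mem_toList.mp
    rw [hR.mul_list_prod_mem_centralizer_iff hz (R \ J).nodup_toList
      (fun s hs => (Finset.mem_sdiff.mp (hRJ s hs)).1) (fun s hs => (hn s (hRJ s hs)).1) hr]
    by_cases hrJ : r ∈ J
    · simp [hrJ]
    · simp [hrJ, hr, (hn r (Finset.mem_sdiff.mpr ⟨hr, hrJ⟩)).2]
  · classical
    obtain ⟨x, hx⟩ := hR.exists_forall_mem_centralizer_iff_notMem (Finset.filter_subset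
      (fun r => ∃ j ∈ Jf, nonAbelianComponent G r ≤ Gf j ⊔ Subgroup.center G) R)
    refine ⟨x, fun r hr => ?_⟩
    have hxr := hx r hr
    rw [Subgroup.mem_centralizer_iff_forall_commute, Finset.mem_filter, and_iff_right hr] at hxr
    rw [← not_iff_not, ← hxr]
    simp only [not_exists, not_and, not_not, SetLike.mem_coe]

/-- Let `G` be a finite non-abelian group with any internal direct decomposition
`G = G₁ × ⋯ × G_d` into nontrivial factors, let `R` be a set of representatives of the
connected components of the non-commuting graph on the greedy set `M`, and `J ⊆ R`.
Then the elements `x` with `C_x = ∏_{r ∈ J} N_r` are exactly those of the form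
`x = z · ∏_{r ∈ R \ J} n_r` with `z ∈ Z(G)` and `n_r ∈ N_r` non-central; in
particular, for every collection of non-abelian direct factors there is a full
element. -/
theorem centComp_eq_iff_product_of_noncentral {G : Type*} [Group G] [Finite G]
    [DecidableEq G] (hG : ¬ ∀ a b : G, a * b = b * a)
    {d : ℕ} (Gf : Fin d → Subgroup G)
    (hnormal : ∀ j, (Gf j).Normal) (hindep : iSupIndep Gf)
    (hsup : ⨆ j, Gf j = ⊤) (hnebot : ∀ j, Gf j ≠ ⊥)
    (R : Finset G) (hRM : (R : Set G) ⊆ greedyMset G)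
    (hRdisj : ∀ r ∈ R, ∀ s ∈ R, r ≠ s → ¬ Relation.ReflTransGen (ncAdj G) r s)
    (hRfull : ∀ m ∈ greedyMset G, ∃ r ∈ R, Relation.ReflTransGen (ncAdj G) r m)
    (J : Finset G) (hJ : J ⊆ R) :
    (∀ x : G,
      (centComp x = ⨆ r ∈ J, nonAbelianComponent G r) ↔
        (∃ z ∈ Subgroup.center G, ∃ n : G → G,
          (∀ r ∈ R \ J, n r ∈ nonAbelianComponent G r ∧ n r ∉ Subgroup.center G) ∧
          x = z * ((R \ J).toList.map n).prod)) ∧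
    (∀ Jf : Finset (Fin d), (∀ j ∈ Jf, ¬ ∀ a b : Gf j, a * b = b * a) →
      ∃ x : G, ∀ r ∈ R,
        ((∃ a ∈ nonAbelianComponent G r, ¬ Commute x a) ↔
          ∃ j ∈ Jf, nonAbelianComponent G r ≤ Gf j ⊔ Subgroup.center G)) :=
  centComp_eq_iff_product_of_noncentral_general Gf R hRM hRdisj hRfull J hJ
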